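/- Let L ∈ ℂ with L ≠ 0, let N : ℝ → ℂ be continuously differentiable, let η : ℝ → ℂ be differentiable with η′(t) = L·η(t) + N(t) for all t, and fix t₀ ∈ ℝ. Then the local truncation error h ↦ η(t₀ + h) − (η(t₀)·exp(h·L) + N(t₀)·(exp(h·L) − 1)/L) is O(h²) as h → 0. -/

import Mathlib

/-!
The ETD step `h ↦ y e^{hL} + n (e^{hL} - 1)/L` is the exact solution of `u' = L u + n`,
`u 0 = y`. Taking `y = η t₀` and `n = N t₀`, the error `e h = η (t₀ + h) - u h` therefore
solves `e' = L e + (N (t₀ + h) - N t₀)` with `e 0 = 0`. Both `e` and the forcing term vanish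
at `0` and are differentiable there, so `e' = O(h)`, and the mean value inequality turns this
into `e = O(h²)`.
-/

open Complex Filter Asymptotics Metric

theorem isBigO_sq_of_hasDerivAt_of_isBigO {F : Type*} [NormedAddCommGroup F] [NormedSpace ℝ F]
    {f f' : ℝ → F} (hf₀ : f 0 = 0) (hf : ∀ᶠ x in nhds 0, HasDerivAt f (f' x) x)
    (hf' : f' =O[nhds 0] fun x => x) : f =O[nhds 0] fun h : ℝ => h ^ 2 := by
  obtain ⟨C, hC₀, hC⟩ := hf'.exists_nonneg
  obtain ⟨δ, hδ, hball⟩ := eventually_nhds_iff_ball.mp (hf.and hC.bound)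
  refine IsBigO.of_bound C (eventually_of_mem (ball_mem_nhds 0 hδ) fun h hh => ?_)
  have hsub : closedBall (0 : ℝ) ‖h‖ ⊆ ball 0 δ := closedBall_subset_ball (by simpa using hh)
  have hderiv_le : ∀ x ∈ closedBall (0 : ℝ) ‖h‖, ‖f' x‖ ≤ C * ‖h‖ := fun x hx =>
    (hball x (hsub hx)).2.trans (by gcongr; exact mem_closedBall_zero_iff.mp hx)
  have hmvt := (convex_closedBall (0 : ℝ) ‖h‖).norm_image_sub_le_of_norm_hasDerivWithin_le
    (fun x hx => (hball x (hsub hx)).1.hasDerivWithinAt) hderiv_le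
    (mem_closedBall_self (norm_nonneg h)) (mem_closedBall_zero_iff.mpr le_rfl)
  simpa [hf₀, sq, mul_assoc] using hmvt

theorem hasDerivAt_cexp_ofReal_mul (L : ℂ) (x : ℝ) :
    HasDerivAt (fun t : ℝ => cexp (t * L)) (L * cexp (x * L)) x := by
  simpa [mul_comm] using (((hasDerivAt_id (x : ℂ)).mul_const L).cexp).comp_ofReal

noncomputable def etdStep (L y n : ℂ) (h : ℝ) : ℂ :=
  y * cexp (h * L) + n * (cexp (h * L) - 1) / L

@[simp]
theorem etdStep_zero (L y n : ℂ) : etdStep L y n 0 = y := by simp [etdStep]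

theorem hasDerivAt_etdStep {L : ℂ} (hL : L ≠ 0) (y n : ℂ) (h : ℝ) :
    HasDerivAt (etdStep L y n) (L * etdStep L y n h + n) h := by
  have hexp := hasDerivAt_cexp_ofReal_mul L h
  refine ((hexp.const_mul y).add (((hexp.sub_const 1).const_mul n).div_const L)).congr_deriv ?_
  simp only [etdStep]
  field_simp
  ring

/-- The ETD scheme is first-order accurate: its local truncation error is O(h²). -/
theorem ETD_local_truncation_error (L : ℂ) (hL : L ≠ 0) (N : ℝ → ℂ)
    (hN : ContDiff ℝ 1 N) (η : ℝ → ℂ) (hη : Differentiable ℝ η)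
    (hode : ∀ t : ℝ, deriv η t = L * η t + N t) (t₀ : ℝ) :
    (fun h : ℝ =>
        η (t₀ + h) - (η t₀ * Complex.exp ((h : ℂ) * L)
          + N t₀ * (Complex.exp ((h : ℂ) * L) - 1) / L))
      =O[nhds 0] (fun h : ℝ => h ^ 2) := by
  set err : ℝ → ℂ := fun h => η (t₀ + h) - etdStep L (η t₀) (N t₀) h
  have hη_shift : ∀ h : ℝ, HasDerivAt (fun h => η (t₀ + h)) (L * η (t₀ + h) + N (t₀ + h)) h :=
    fun h => by simpa [hode] using (hη (t₀ + h)).hasDerivAt.comp_const_add t₀ h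
  have herr : ∀ h : ℝ, HasDerivAt err (L * err h + (N (t₀ + h) - N t₀)) h := fun h => by
    refine ((hη_shift h).sub (hasDerivAt_etdStep hL (η t₀) (N t₀) h)).congr_deriv ?_
    ring
  have herr₀ : err 0 = 0 := by simp [err]
  have herr_lin : err =O[nhds 0] fun h => h := by
    simpa [herr₀] using (herr 0).isBigO_sub
  have hN_lin : (fun h : ℝ => N (t₀ + h) - N t₀) =O[nhds 0] fun h => h := by
    simpa using ((hN.differentiable one_ne_zero (t₀ + 0)).hasDerivAt.comp_const_add t₀ 0).isBigO_sub
  exact isBigO_sq_of_hasDerivAt_of_isBigO herr₀ (.of_forall herr)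
    ((herr_lin.const_mul_left L).add hN_lin)
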